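/- Under the standing assumptions on φ and φ_λ, assume h is sequentially weakly continuous on H. Fix p ∈ [0,1], let ψ : H → ℝ ∪ {+∞} be a proper, convex, coercive, lower semicontinuous function with M(p) ∩ dom ψ ≠ ∅, where M(p) := {x : φ(x) ≥ p} and M_λ(p) := {x : φ_λ(x) ≥ p}. Let λ_k → 0⁺ and for each k let x_{λ_k} be a minimizer of the Moreau envelope M_{λ_k}ψ over M_{λ_k}(p). If x_{λ_k} converges weakly to x₀, then x₀ is a minimizer of ψ over M(p), and moreover M_{λ_k}ψ(x_{λ_k}) → ψ(x₀). (Theorem 5.1(b), weak convergence of minimizers.) -/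

import Mathlib

open Filter Topology MeasureTheory

/-- The Moreau envelope of a function `S : H × E → ℝ` (in two arguments) with parameter
`lam`, for the Hilbert norm of the product. -/
noncomputable def moreauEnv2 {H E : Type*} [NormedAddCommGroup H] [InnerProductSpace ℝ H]
    [NormedAddCommGroup E] [InnerProductSpace ℝ E]
    (S : H → E → ℝ) (lam : ℝ) (x : H) (z : E) : ℝ :=
  ⨅ u : H × E, (S u.1 u.2 + (‖x - u.1‖ ^ 2 + ‖z - u.2‖ ^ 2) / (2 * lam))

/-- Weak (sequential) convergence in a Hilbert space: `⟪x_k, y⟫ → ⟪x₀, y⟫` for every `y`. -/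
def WeakSeqTendsto {H : Type*} [NormedAddCommGroup H] [InnerProductSpace ℝ H]
    (x : ℕ → H) (x₀ : H) : Prop :=
  ∀ y : H, Tendsto (fun k => (inner ℝ (x k) y : ℝ)) atTop (𝓝 (inner ℝ x₀ y))

/-- Moreau envelope of an extended-real-valued function `ψ : H → ℝ ∪ {±∞}`. -/
noncomputable def eMoreauEnv {H : Type*} [NormedAddCommGroup H] [InnerProductSpace ℝ H]
    (ψ : H → EReal) (lam : ℝ) (x : H) : EReal :=
  ⨅ z : H, (ψ z + ((‖x - z‖ ^ 2 / (2 * lam) : ℝ) : EReal))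

/-!
Both conclusions rest on one lower-limit estimate for Moreau envelopes: if `f` is convex and
lower semicontinuous with an affine minorant, `λ_k → 0`, `w_k ⇀ w₀` and `M_{λ_k} f (w_k) ≤ a_k → b`,
then `f w₀ ≤ b`. The affine minorant (Hahn–Banach applied to the closed convex epigraph) lets the
quadratic penalty force near-minimizers `u_k` of the envelopes to satisfy `‖w_k - u_k‖ → 0`, so
`u_k ⇀ w₀`, and closed convex sublevel sets are weakly sequentially closed.

Applied to `S` at `(x_k, ξ ω)` for every `ω` lying in infinitely many of the events
`{M_{λ_k} S (x_k, ξ) ≤ h x_k}` (and using weak continuity of `h`), it shows that `x₀` is feasible: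
the limsup of these events has probability at least `p`. Applied to `ψ`, together with
`M_λ ψ ≤ ψ` and `M(p) ⊆ M_λ(p)`, it squeezes `M_{λ_k} ψ (x_k)` between `ψ x₀` in the lower limit
and `inf_{M(p)} ψ ≤ ψ x₀` from above.
-/

open Set Function

section WeakConvergence

variable {ι G : Type*} [NormedAddCommGroup G] [NormedSpace ℝ G]

def TendstoWeakly (w : ι → G) (l : Filter ι) (w₀ : G) : Prop :=
  ∀ Λ : StrongDual ℝ G, Tendsto (fun k => Λ (w k)) l (𝓝 (Λ w₀))

namespace TendstoWeakly

variable {l : Filter ι} {w u : ι → G} {w₀ : G}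

theorem mono_left (hw : TendstoWeakly w l w₀) {l' : Filter ι} (hl : l' ≤ l) :
    TendstoWeakly w l' w₀ :=
  fun Λ => (hw Λ).mono_left hl

theorem of_tendsto_norm_sub (hw : TendstoWeakly w l w₀)
    (hu : Tendsto (fun k => ‖w k - u k‖) l (𝓝 0)) : TendstoWeakly u l w₀ := by
  intro Λ
  have hΛ : Tendsto (fun k => Λ (w k - u k)) l (𝓝 0) :=
    squeeze_zero_norm (fun k => Λ.le_opNorm _) (by simpa only [mul_zero] using hu.const_mul ‖Λ‖)
  refine ((hw Λ).sub hΛ).congr (fun k => ?_) |>.trans (by rw [sub_zero])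
  rw [map_sub, sub_sub_cancel]

theorem mem_of_convex [l.NeBot] (hw : TendstoWeakly w l w₀) {s : Set G} (hs : Convex ℝ s)
    (hcl : IsClosed s) (hws : ∀ᶠ k in l, w k ∈ s) : w₀ ∈ s := by
  by_contra h
  obtain ⟨Λ, r, hΛ, hr⟩ := geometric_hahn_banach_point_closed hs hcl h
  exact hΛ.not_ge (ge_of_tendsto (hw Λ) (hws.mono fun k hk => (hr _ hk).le))

theorem prodMk_const {F : Type*} [NormedAddCommGroup F] [NormedSpace ℝ F]
    (hw : TendstoWeakly w l w₀) (z : F) : TendstoWeakly (fun k => (w k, z)) l (w₀, z) := by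
  intro Λ
  have hsplit : ∀ v, Λ (v, z) = Λ.comp (ContinuousLinearMap.inl ℝ G F) v + Λ (0, z) := by
    intro v
    rw [ContinuousLinearMap.comp_apply, ContinuousLinearMap.inl_apply, ← map_add,
      Prod.mk_add_mk, add_zero, zero_add]
  rw [hsplit w₀]
  exact ((hw _).add_const _).congr fun k => (hsplit (w k)).symm

end TendstoWeakly

theorem WeakSeqTendsto.tendstoWeakly {H : Type*} [NormedAddCommGroup H] [InnerProductSpace ℝ H]
    [CompleteSpace H] {x : ℕ → H} {x₀ : H} (hx : WeakSeqTendsto x x₀) :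
    TendstoWeakly x atTop x₀ := by
  intro Λ
  have hΛ : ∀ y, inner ℝ y ((InnerProductSpace.toDual ℝ H).symm Λ) = Λ y := fun y => by
    rw [real_inner_comm, InnerProductSpace.toDual_symm_apply]
  simpa only [hΛ] using hx ((InnerProductSpace.toDual ℝ H).symm Λ)

end WeakConvergence

theorem tendsto_zero_of_sq_le_mul {ι : Type*} {l : Filter ι} {d lam : ι → ℝ} {B K : ℝ}
    (hlam : Tendsto lam l (𝓝 0))
    (hd : ∀ᶠ k in l, 0 ≤ d k ∧ 0 ≤ lam k ∧ d k ^ 2 ≤ lam k * (B + K * d k)) :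
    Tendsto d l (𝓝 0) := by
  have hbound : Tendsto (fun k => √(2 * B * lam k + K ^ 2 * lam k ^ 2)) l (𝓝 0) := by
    simpa using ((hlam.const_mul (2 * B)).add ((hlam.pow 2).const_mul (K ^ 2))).sqrt
  refine squeeze_zero' (hd.mono fun k hk => hk.1) (hd.mono fun k ⟨hd0, hlam0, hk⟩ => ?_) hbound
  calc d k = √(d k ^ 2) := (Real.sqrt_sq hd0).symm
    _ ≤ _ := Real.sqrt_le_sqrt (by nlinarith [sq_nonneg (d k - K * lam k)])

theorem isClosed_epigraph_coe {X : Type*} [TopologicalSpace X] {f : X → EReal}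
    (hf : LowerSemicontinuous f) : IsClosed {q : X × ℝ | f q.1 ≤ q.2} :=
  hf.isClosed_epigraph.preimage
    (continuous_fst.prodMk (continuous_coe_real_ereal.comp continuous_snd))

theorem LowerSemicontinuous.coe_ereal {X : Type*} [TopologicalSpace X] {F : X → ℝ}
    (hF : LowerSemicontinuous F) : LowerSemicontinuous fun x => (F x : EReal) :=
  continuous_coe_real_ereal.comp_lowerSemicontinuous hF EReal.coe_strictMono.monotone

section ConvexAnalysis

variable {G : Type*} [NormedAddCommGroup G] [NormedSpace ℝ G] {f : G → EReal}

theorem convex_epigraph_of_le_mul_add_mul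
    (hf : ∀ x y : G, ∀ t : ℝ, 0 ≤ t → t ≤ 1 →
      f (t • x + (1 - t) • y) ≤ (t : EReal) * f x + ((1 - t : ℝ) : EReal) * f y) :
    Convex ℝ {q : G × ℝ | f q.1 ≤ q.2} := by
  intro q hq q' hq' a b ha hb hab
  obtain rfl : b = 1 - a := by linarith
  calc f (a • q.1 + (1 - a) • q'.1)
      ≤ (a : EReal) * f q.1 + ((1 - a : ℝ) : EReal) * f q'.1 := hf _ _ a ha (by linarith)
    _ ≤ (a : EReal) * q.2 + ((1 - a : ℝ) : EReal) * q'.2 := by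
      gcongr <;> exact_mod_cast ‹_›
    _ = ((a • q + (1 - a) • q').2 : ℝ) := by simp

theorem ConvexOn.convex_epigraph_coe {F : G → ℝ} (hF : ConvexOn ℝ univ F) :
    Convex ℝ {q : G × ℝ | (F q.1 : EReal) ≤ q.2} := by
  simpa using hF.convex_epigraph

theorem convex_sublevel_of_convex_epigraph (hepi : Convex ℝ {q : G × ℝ | f q.1 ≤ q.2})
    (α : ℝ) : Convex ℝ {u | f u ≤ α} := by
  intro u hu v hv a b ha hb hab
  have := hepi (x := (u, α)) hu (y := (v, α)) hv ha hb hab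
  simpa [← add_mul, hab] using this

theorem exists_affine_minorant_of_convex_epigraph (hepi : Convex ℝ {q : G × ℝ | f q.1 ≤ q.2})
    (hf : LowerSemicontinuous f) {x₀ : G} {r₀ : ℝ} (h₀ : f x₀ = r₀) :
    ∃ (L : StrongDual ℝ G) (c : ℝ), ∀ u, ((L u + c : ℝ) : EReal) ≤ f u := by
  have hout : (x₀, r₀ - 1) ∉ {q : G × ℝ | f q.1 ≤ q.2} := by
    change ¬ f x₀ ≤ _
    rw [h₀, EReal.coe_le_coe_iff, not_le]
    linarith
  obtain ⟨Λ, s, hΛ₀, hΛ⟩ := geometric_hahn_banach_point_closed hepi (isClosed_epigraph_coe hf) hout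
  -- The separating hyperplane is not vertical (`β > 0`); solving `Λ (u, r) = s` for `r` gives
  -- the minorant.
  set β := Λ (0, 1)
  have hsplit : ∀ u t, Λ (u, t) = Λ (u, 0) + t * β := fun u t => by
    rw [← smul_eq_mul, ← map_smul, ← map_add, Prod.smul_mk, smul_zero, smul_eq_mul, mul_one,
      Prod.mk_add_mk, add_zero, zero_add]
  have hβ : 0 < β := by
    have h := hΛ (x₀, r₀) (by simp [h₀])
    rw [hsplit] at h hΛ₀
    linarith
  refine ⟨-β⁻¹ • Λ.comp (ContinuousLinearMap.inl ℝ G ℝ), s / β, fun u => ?_⟩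
  refine EReal.le_of_forall_lt_iff_le.1 fun r hr => ?_
  have h := hΛ (u, r) hr.le
  rw [hsplit] at h
  have : -β⁻¹ * Λ (u, 0) + s / β ≤ r := by
    rw [neg_mul, inv_mul_eq_div, ← sub_eq_neg_add, ← sub_div, div_le_iff₀ hβ]
    linarith
  exact_mod_cast this

theorem ConvexOn.exists_affine_minorant {F : G → ℝ} (hF : ConvexOn ℝ univ F)
    (hlsc : LowerSemicontinuous F) : ∃ (L : StrongDual ℝ G) (c : ℝ), ∀ u, L u + c ≤ F u := by
  obtain ⟨L, c, hL⟩ := exists_affine_minorant_of_convex_epigraph (f := fun u => (F u : EReal))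
    hF.convex_epigraph_coe hlsc.coe_ereal (x₀ := 0) rfl
  exact ⟨L, c, fun u => EReal.coe_le_coe_iff.1 (hL u)⟩

theorem le_of_tendstoWeakly_of_exists_add_sq_div_le
    (hepi : Convex ℝ {q : G × ℝ | f q.1 ≤ q.2}) (hf : LowerSemicontinuous f)
    {L : StrongDual ℝ G} {c : ℝ} (hL : ∀ u, ((L u + c : ℝ) : EReal) ≤ f u)
    {ι : Type*} {l : Filter ι} [l.NeBot] {lam a : ι → ℝ} {b : ℝ} {w : ι → G} {w₀ : G}
    (hlam_pos : ∀ k, 0 < lam k) (hlam : Tendsto lam l (𝓝 0)) (ha : Tendsto a l (𝓝 b))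
    (hw : TendstoWeakly w l w₀)
    (hu : ∀ᶠ k in l, ∃ u, f u + ((‖w k - u‖ ^ 2 / (2 * lam k) : ℝ) : EReal) ≤ a k) :
    f w₀ ≤ b := by
  obtain ⟨u, hu⟩ := hu.choice
  have hreal : ∀ᶠ k in l, L (u k) + c + ‖w k - u k‖ ^ 2 / (2 * lam k) ≤ a k :=
    hu.mono fun k hk => by exact_mod_cast (add_le_add (hL (u k)) le_rfl).trans hk
  have hB : ∀ᶠ k in l, a k - c - L (w k) ≤ b - c - L w₀ + 1 :=
    ((ha.sub_const c).sub (hw L)).eventually (eventually_le_nhds (by linarith))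
  have hd : Tendsto (fun k => ‖w k - u k‖) l (𝓝 0) := by
    refine tendsto_zero_of_sq_le_mul (B := 2 * (b - c - L w₀ + 1)) (K := 2 * ‖L‖) hlam ?_
    filter_upwards [hreal, hB] with k hk hBk
    have hLu : L (w k) - L (u k) ≤ ‖L‖ * ‖w k - u k‖ := by
      rw [← map_sub]
      exact (le_abs_self _).trans (L.le_opNorm _)
    have hlamk := hlam_pos k
    refine ⟨norm_nonneg _, hlamk.le, ?_⟩
    have hq : ‖w k - u k‖ ^ 2 / (2 * lam k) ≤ b - c - L w₀ + 1 + ‖L‖ * ‖w k - u k‖ := by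
      linarith
    rw [div_le_iff₀ (by positivity)] at hq
    linarith
  have hfu : ∀ α : ℝ, b < α → ∀ᶠ k in l, f (u k) ≤ α := fun α hα => by
    filter_upwards [hu, ha.eventually (gt_mem_nhds hα)] with k hk hak
    have hq : (0 : EReal) ≤ ((‖w k - u k‖ ^ 2 / (2 * lam k) : ℝ) : EReal) :=
      EReal.coe_nonneg.2 (div_nonneg (sq_nonneg _) (by linarith [hlam_pos k]))
    exact (le_add_of_nonneg_right hq).trans (hk.trans (EReal.coe_le_coe_iff.2 hak.le))
  refine EReal.le_of_forall_lt_iff_le.1 fun α hα => ?_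
  exact (hw.of_tendsto_norm_sub hd).mem_of_convex (convex_sublevel_of_convex_epigraph hepi α)
    (hf.isClosed_preimage α) (hfu α (EReal.coe_lt_coe_iff.1 hα))

end ConvexAnalysis

section MoreauEnvelope

variable {H : Type*} [NormedAddCommGroup H] [InnerProductSpace ℝ H] {ψ : H → EReal}

theorem eMoreauEnv_le_self (lam : ℝ) (x : H) : eMoreauEnv ψ lam x ≤ ψ x :=
  (iInf_le _ x).trans_eq (by simp)

theorem le_of_tendstoWeakly_of_eMoreauEnv_le
    (hepi : Convex ℝ {q : H × ℝ | ψ q.1 ≤ q.2}) (hψ : LowerSemicontinuous ψ)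
    {L : StrongDual ℝ H} {c : ℝ} (hL : ∀ u, ((L u + c : ℝ) : EReal) ≤ ψ u)
    {ι : Type*} {l : Filter ι} [l.NeBot] {lam : ι → ℝ} (hlam_pos : ∀ k, 0 < lam k)
    (hlam : Tendsto lam l (𝓝 0)) {x : ι → H} {x₀ : H} (hx : TendstoWeakly x l x₀) {a : ℝ}
    (ha : ∀ᶠ k in l, eMoreauEnv ψ (lam k) (x k) ≤ a) : ψ x₀ ≤ a := by
  refine le_of_tendstoWeakly_of_exists_add_sq_div_le hepi hψ hL hlam_pos hlam
    (by simpa using tendsto_const_nhds.add hlam) hx (a := fun k => a + lam k) ?_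
  filter_upwards [ha] with k hk
  obtain ⟨z, hz⟩ := iInf_lt_iff.1 (hk.trans_lt (EReal.coe_lt_coe_iff.2
    (lt_add_of_pos_right a (hlam_pos k))))
  exact ⟨z, hz.le⟩

theorem tendsto_eMoreauEnv (hepi : Convex ℝ {q : H × ℝ | ψ q.1 ≤ q.2})
    (hψ : LowerSemicontinuous ψ) {L : StrongDual ℝ H} {c : ℝ}
    (hL : ∀ u, ((L u + c : ℝ) : EReal) ≤ ψ u) {lam : ℕ → ℝ} (hlam_pos : ∀ k, 0 < lam k)
    (hlam : Tendsto lam atTop (𝓝 0)) {x : ℕ → H} {x₀ : H} (hx : TendstoWeakly x atTop x₀)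
    (hle : ∀ k, eMoreauEnv ψ (lam k) (x k) ≤ ψ x₀) :
    Tendsto (fun k => eMoreauEnv ψ (lam k) (x k)) atTop (𝓝 (ψ x₀)) := by
  refine tendsto_order.2 ⟨fun a ha => ?_, fun a ha => .of_forall fun k => (hle k).trans_lt ha⟩
  obtain ⟨r, har, hr⟩ := EReal.exists_between_coe_real ha
  by_contra hev
  set l := atTop ⊓ 𝓟 {k | eMoreauEnv ψ (lam k) (x k) ≤ a}
  have : l.NeBot := frequently_iff_neBot.1 (by simpa only [not_eventually, not_lt] using hev)
  exact hr.not_ge (le_of_tendstoWeakly_of_eMoreauEnv_le (l := l) hepi hψ hL hlam_pos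
    (hlam.mono_left inf_le_left) (hx.mono_left inf_le_left)
    (eventually_inf_principal.2 (.of_forall fun k hk => le_trans hk har.le)))

end MoreauEnvelope

theorem norm_prod_sq_le {α β : Type*} [SeminormedAddCommGroup α] [SeminormedAddCommGroup β]
    (q : α × β) : ‖q‖ ^ 2 ≤ ‖q.1‖ ^ 2 + ‖q.2‖ ^ 2 := by
  rw [Prod.norm_def]
  rcases max_choice ‖q.1‖ ‖q.2‖ with h | h <;> rw [h] <;> nlinarith [sq_nonneg ‖q.1‖, sq_nonneg ‖q.2‖]

theorem convexOn_ciSup {ι E : Type*} [Nonempty ι] [AddCommGroup E] [Module ℝ E] {s : Set E}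
    {g : ι → E → ℝ} (hg : ∀ i, ConvexOn ℝ s (g i))
    (hbdd : ∀ x, BddAbove (range fun i => g i x)) : ConvexOn ℝ s fun x => ⨆ i, g i x := by
  refine ⟨(hg (Classical.arbitrary ι)).1, fun x hx y hy a b ha hb hab => ciSup_le fun i => ?_⟩
  refine ((hg i).2 hx hy ha hb hab).trans ?_
  gcongr
  · exact le_ciSup (hbdd x) i
  · exact le_ciSup (hbdd y) i

theorem le_measure_limsup_atTop {α : Type*} [MeasurableSpace α] {μ : Measure α}
    [IsFiniteMeasure μ] {s : ℕ → Set α} (hs : ∀ n, MeasurableSet (s n)) {p : ENNReal}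
    (hp : ∀ n, p ≤ μ (s n)) : p ≤ μ (limsup s atTop) := by
  have hanti : Antitone fun n => ⋃ i ≥ n, s i :=
    fun m n hmn => biUnion_mono (fun i hi => le_trans hmn hi) fun _ _ => le_rfl
  rw [limsup_eq_iInf_iSup_of_nat]
  simp only [iInf_eq_iInter, iSup_eq_iUnion]
  rw [hanti.measure_iInter
    (fun n => (MeasurableSet.biUnion (to_countable _) fun i _ => hs i).nullMeasurableSet)
    ⟨0, measure_ne_top μ _⟩]
  exact le_iInf fun n => (hp n).trans (measure_mono (subset_biUnion_of_mem (le_refl n)))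

theorem IsCompact.bddAbove_range_eval_add {Y : Type*} [NormedAddCommGroup Y] [NormedSpace ℝ Y]
    {C : Set (WeakDual ℝ Y)} (hC : IsCompact C) (y : Y) (r : ℝ) :
    BddAbove (range fun v : C => (v : WeakDual ℝ Y) y + r) := by
  simpa only [image_eq_range] using
    (hC.image ((WeakDual.eval_continuous y).add_const r)).bddAbove

section ChanceConstraint

variable {H E : Type*} [NormedAddCommGroup H] [InnerProductSpace ℝ H]
  [NormedAddCommGroup E] [InnerProductSpace ℝ E] {S : H → E → ℝ}

theorem bddBelow_range_moreauEnv2 {L : StrongDual ℝ (H × E)} {c : ℝ}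
    (hL : ∀ q, L q + c ≤ uncurry S q) {lam : ℝ} (hlam : 0 < lam) (x : H) (z : E) :
    BddBelow (range fun u : H × E => S u.1 u.2 + (‖x - u.1‖ ^ 2 + ‖z - u.2‖ ^ 2) / (2 * lam)) := by
  refine ⟨L (x, z) + c - lam * ‖L‖ ^ 2 / 2, ?_⟩
  rintro _ ⟨u, rfl⟩
  set t := ‖(x, z) - u‖
  have hLu : L (x, z) - L u ≤ ‖L‖ * t := by
    rw [← map_sub]
    exact (le_abs_self _).trans (L.le_opNorm _)
  have ht : t ^ 2 / (2 * lam) ≤ (‖x - u.1‖ ^ 2 + ‖z - u.2‖ ^ 2) / (2 * lam) :=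
    div_le_div_of_nonneg_right (norm_prod_sq_le ((x, z) - u)) (by positivity)
  -- AM-GM: `‖L‖ t ≤ t² / (2 lam) + lam ‖L‖² / 2`
  have hamgm : ‖L‖ * t - lam * ‖L‖ ^ 2 / 2 ≤ t ^ 2 / (2 * lam) := by
    rw [le_div_iff₀ (by positivity)]
    nlinarith [sq_nonneg (t - lam * ‖L‖)]
  have hSu : L u + c ≤ S u.1 u.2 := hL u
  show L (x, z) + c - lam * ‖L‖ ^ 2 / 2 ≤ S u.1 u.2 + (‖x - u.1‖ ^ 2 + ‖z - u.2‖ ^ 2) / (2 * lam)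
  linarith

theorem moreauEnv2_le {L : StrongDual ℝ (H × E)} {c : ℝ} (hL : ∀ q, L q + c ≤ uncurry S q)
    {lam : ℝ} (hlam : 0 < lam) (x : H) (z : E) : moreauEnv2 S lam x z ≤ S x z :=
  (ciInf_le (bddBelow_range_moreauEnv2 hL hlam x z) (x, z)).trans_eq (by simp)

theorem upperSemicontinuous_moreauEnv2 {L : StrongDual ℝ (H × E)} {c : ℝ}
    (hL : ∀ q, L q + c ≤ uncurry S q) {lam : ℝ} (hlam : 0 < lam) (x : H) :
    UpperSemicontinuous (moreauEnv2 S lam x) :=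
  upperSemicontinuous_ciInf (bddBelow_range_moreauEnv2 hL hlam x) fun u =>
    (by fun_prop : Continuous fun z : E =>
      S u.1 u.2 + (‖x - u.1‖ ^ 2 + ‖z - u.2‖ ^ 2) / (2 * lam)).upperSemicontinuous

theorem le_measure_of_forall_le_measure_moreauEnv2 [MeasurableSpace E] [OpensMeasurableSpace E]
    (hconv : ConvexOn ℝ univ (uncurry S)) (hlsc : LowerSemicontinuous (uncurry S))
    {Ω : Type*} [MeasurableSpace Ω] {P : Measure Ω} [IsFiniteMeasure P] {ξ : Ω → E}
    (hξ : Measurable ξ) {g : H → ℝ} {lam : ℕ → ℝ} (hlam_pos : ∀ k, 0 < lam k)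
    (hlam : Tendsto lam atTop (𝓝 0)) {x : ℕ → H} {x₀ : H} (hx : TendstoWeakly x atTop x₀)
    (hg : Tendsto (fun k => g (x k)) atTop (𝓝 (g x₀))) {p : ENNReal}
    (hp : ∀ k, p ≤ P {ω | moreauEnv2 S (lam k) (x k) (ξ ω) ≤ g (x k)}) :
    p ≤ P {ω | S x₀ (ξ ω) ≤ g x₀} := by
  obtain ⟨L, c, hL⟩ := hconv.exists_affine_minorant hlsc
  have hA : ∀ k, MeasurableSet {ω | moreauEnv2 S (lam k) (x k) (ξ ω) ≤ g (x k)} := fun k =>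
    measurableSet_le ((upperSemicontinuous_moreauEnv2 hL (hlam_pos k) (x k)).measurable.comp hξ)
      measurable_const
  refine (le_measure_limsup_atTop hA hp).trans (measure_mono fun ω hω => ?_)
  set l := atTop ⊓ 𝓟 {k | moreauEnv2 S (lam k) (x k) (ξ ω) ≤ g (x k)}
  have : l.NeBot := frequently_iff_neBot.1 (mem_limsup_iff_frequently_mem.1 hω)
  refine EReal.coe_le_coe_iff.1 (le_of_tendstoWeakly_of_exists_add_sq_div_le (l := l)
    hconv.convex_epigraph_coe hlsc.coe_ereal (fun q => EReal.coe_le_coe_iff.2 (hL q)) hlam_pos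
    (hlam.mono_left inf_le_left) (a := fun k => g (x k) + lam k)
    (by simpa using (hg.add hlam).mono_left inf_le_left)
    ((hx.prodMk_const (ξ ω)).mono_left inf_le_left) ?_)
  filter_upwards [eventually_inf_principal.2 (.of_forall fun k hk => hk)] with k hk
  obtain ⟨u, hu⟩ := exists_lt_of_ciInf_lt (hk.trans_lt (lt_add_of_pos_right _ (hlam_pos k)))
  refine ⟨u, ?_⟩
  show ((S u.1 u.2 : ℝ) : EReal) + _ ≤ _
  rw [← EReal.coe_add, EReal.coe_le_coe_iff]
  have := div_le_div_of_nonneg_right (norm_prod_sq_le ((x k, ξ ω) - u))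
    (by linarith [hlam_pos k] : 0 ≤ 2 * lam k)
  exact le_trans (by simpa using this) hu.le

end ChanceConstraint

theorem stmt16_general
    {H Y : Type*} [NormedAddCommGroup H] [InnerProductSpace ℝ H] [CompleteSpace H]
    [NormedAddCommGroup Y] [NormedSpace ℝ Y] {m : ℕ}
    {Ω : Type*} [MeasurableSpace Ω] (P : Measure Ω) [IsProbabilityMeasure P]
    (ξ : Ω → EuclideanSpace ℝ (Fin m)) (hξ : Measurable ξ)
    (C : Set (WeakDual ℝ Y)) (hCne : C.Nonempty) (hCcpt : IsCompact C)
    (Φ : H → EuclideanSpace ℝ (Fin m) → Y)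
    (hΦ : Continuous fun q : H × EuclideanSpace ℝ (Fin m) => Φ q.1 q.2)
    (h : H → ℝ) (hC1 : ContDiff ℝ 1 h)
    (hscal : ∀ v ∈ C, ConvexOn ℝ Set.univ
      (fun q : H × EuclideanSpace ℝ (Fin m) => v (Φ q.1 q.2) + h q.1))
    (S : H → EuclideanSpace ℝ (Fin m) → ℝ)
    (hS : ∀ x z, S x z = ⨆ v : C, ((v : WeakDual ℝ Y) (Φ x z) + h x))
    (φ : H → ℝ)
    (hφ : ∀ x, φ x = (P {ω | S x (ξ ω) ≤ h x}).toReal)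
    (φl : ℝ → H → ℝ)
    (hφl : ∀ lam x, φl lam x = (P {ω | moreauEnv2 S lam x (ξ ω) ≤ h x}).toReal)
    (hwk : ∀ (x : ℕ → H) (x₀ : H), WeakSeqTendsto x x₀ →
      Tendsto (fun k => h (x k)) atTop (𝓝 (h x₀)))
    (p : ℝ)
    (ψ : H → EReal)
    (hψbot : ∀ x, ψ x ≠ ⊥) (hψproper : ∃ x, ψ x ≠ ⊤)
    (hψconv : ∀ x y : H, ∀ t : ℝ, 0 ≤ t → t ≤ 1 →
      ψ (t • x + (1 - t) • y) ≤ (t : EReal) * ψ x + ((1 - t : ℝ) : EReal) * ψ y)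
    (hψlsc : LowerSemicontinuous ψ) :
    ∀ lam : ℕ → ℝ, (∀ k, 0 < lam k) → Tendsto lam atTop (𝓝 0) →
    ∀ (x : ℕ → H) (x₀ : H),
      (∀ k, p ≤ φl (lam k) (x k)) →
      (∀ k, ∀ y : H, p ≤ φl (lam k) y →
        eMoreauEnv ψ (lam k) (x k) ≤ eMoreauEnv ψ (lam k) y) →
      WeakSeqTendsto x x₀ →
      ((p ≤ φ x₀ ∧ ∀ y : H, p ≤ φ y → ψ x₀ ≤ ψ y) ∧
        Tendsto (fun k => eMoreauEnv ψ (lam k) (x k)) atTop (𝓝 (ψ x₀))) := by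
  intro lam hlam_pos hlam x x₀ hx_feas hx_min hx
  have : Nonempty C := hCne.to_subtype
  have hSsup : uncurry S = fun q => ⨆ v : C, (v : WeakDual ℝ Y) (Φ q.1 q.2) + h q.1 :=
    funext fun q => hS q.1 q.2
  have hbdd := fun q : H × EuclideanSpace ℝ (Fin m) =>
    hCcpt.bddAbove_range_eval_add (Φ q.1 q.2) (h q.1)
  have hSconv : ConvexOn ℝ univ (uncurry S) :=
    hSsup ▸ convexOn_ciSup (fun v => hscal v v.2) hbdd
  have hSlsc : LowerSemicontinuous (uncurry S) :=
    hSsup ▸ lowerSemicontinuous_ciSup hbdd fun v =>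
      (((map_continuous (v : WeakDual ℝ Y)).comp hΦ).add
        (hC1.continuous.comp continuous_fst)).lowerSemicontinuous
  obtain ⟨L, c, hL⟩ := hSconv.exists_affine_minorant hSlsc
  have hmeasure : ∀ {a : ℝ} {A : Set Ω}, a ≤ (P A).toReal ↔ ENNReal.ofReal a ≤ P A :=
    (ENNReal.ofReal_le_iff_le_toReal (measure_ne_top P _)).symm
  have hφ_le : ∀ k y, φ y ≤ φl (lam k) y := fun k y => by
    rw [hφ, hφl]
    exact ENNReal.toReal_mono (measure_ne_top P _)
      (measure_mono fun ω hω => (moreauEnv2_le hL (hlam_pos k) _ _).trans hω)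
  have hx₀ : p ≤ φ x₀ := by
    rw [hφ, hmeasure]
    exact le_measure_of_forall_le_measure_moreauEnv2 hSconv hSlsc hξ hlam_pos hlam
      hx.tendstoWeakly (hwk x x₀ hx) fun k => hmeasure.1 (hφl _ _ ▸ hx_feas k)
  obtain ⟨x₁, hx₁⟩ := hψproper
  have hψepi := convex_epigraph_of_le_mul_add_mul hψconv
  obtain ⟨M, d, hM⟩ := exists_affine_minorant_of_convex_epigraph hψepi hψlsc
    (EReal.coe_toReal hx₁ (hψbot x₁)).symm
  have henv : ∀ y, p ≤ φ y → ∀ k, eMoreauEnv ψ (lam k) (x k) ≤ ψ y := fun y hy k =>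
    (hx_min k y (hy.trans (hφ_le k y))).trans (eMoreauEnv_le_self _ _)
  have htends := tendsto_eMoreauEnv hψepi hψlsc hM hlam_pos hlam hx.tendstoWeakly (henv x₀ hx₀)
  exact ⟨⟨hx₀, fun y hy => le_of_tendsto' htends (henv y hy)⟩, htends⟩

/-- Theorem 5.1(b), weak convergence of minimizers: if `x_{λ_k}` minimizes `M_{λ_k}ψ`
over `M_{λ_k}(p)` and `x_{λ_k} ⇀ x₀` weakly, then `x₀` minimizes `ψ` over `M(p)` and
`M_{λ_k}ψ(x_{λ_k}) → ψ(x₀)`. -/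
theorem stmt16
    {H Y : Type*} [NormedAddCommGroup H] [InnerProductSpace ℝ H] [CompleteSpace H]
    [SecondCountableTopology H]
    [NormedAddCommGroup Y] [NormedSpace ℝ Y] [CompleteSpace Y] {m : ℕ}
    {Ω : Type*} [MeasurableSpace Ω] (P : Measure Ω) [IsProbabilityMeasure P]
    (ξ : Ω → EuclideanSpace ℝ (Fin m)) (hξ : Measurable ξ)
    (hlaw : P.map ξ ≪ volume)
    (K : Set Y) (hKne : K.Nonempty) (hKcl : IsClosed K) (hKconv : Convex ℝ K)
    (hKcone : ∀ c : ℝ, 0 ≤ c → ∀ y ∈ K, c • y ∈ K)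
    (C : Set (WeakDual ℝ Y)) (hCne : C.Nonempty) (hCconv : Convex ℝ C) (hCcpt : IsCompact C)
    (hCgen : closure {w : WeakDual ℝ Y | ∃ c : ℝ, 0 ≤ c ∧ ∃ v ∈ C, w = c • v}
      = {w : WeakDual ℝ Y | ∀ y ∈ K, 0 ≤ w y})
    (Φ : H → EuclideanSpace ℝ (Fin m) → Y)
    (hΦ : Continuous fun q : H × EuclideanSpace ℝ (Fin m) => Φ q.1 q.2)
    (h : H → ℝ) (hconv : ConvexOn ℝ Set.univ h) (hC1 : ContDiff ℝ 1 h)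
    (hscal : ∀ v ∈ C, ConvexOn ℝ Set.univ
      (fun q : H × EuclideanSpace ℝ (Fin m) => v (Φ q.1 q.2) + h q.1))
    (S : H → EuclideanSpace ℝ (Fin m) → ℝ)
    (hS : ∀ x z, S x z = ⨆ v : C, ((v : WeakDual ℝ Y) (Φ x z) + h x))
    (φ : H → ℝ)
    (hφ : ∀ x, φ x = (P {ω | S x (ξ ω) ≤ h x}).toReal)
    (φl : ℝ → H → ℝ)
    (hφl : ∀ lam x, φl lam x = (P {ω | moreauEnv2 S lam x (ξ ω) ≤ h x}).toReal)
    (hwk : ∀ (x : ℕ → H) (x₀ : H), WeakSeqTendsto x x₀ →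
      Tendsto (fun k => h (x k)) atTop (𝓝 (h x₀)))
    (p : ℝ) (hp : p ∈ Set.Icc (0 : ℝ) 1)
    (ψ : H → EReal)
    (hψbot : ∀ x, ψ x ≠ ⊥) (hψproper : ∃ x, ψ x ≠ ⊤)
    (hψconv : ∀ x y : H, ∀ t : ℝ, 0 ≤ t → t ≤ 1 →
      ψ (t • x + (1 - t) • y) ≤ (t : EReal) * ψ x + ((1 - t : ℝ) : EReal) * ψ y)
    (hψlsc : LowerSemicontinuous ψ)
    (hψcoer : ∀ α : ℝ, Bornology.IsBounded {x | ψ x ≤ (α : EReal)})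
    (hfeas : ∃ x : H, p ≤ φ x ∧ ψ x ≠ ⊤) :
    ∀ lam : ℕ → ℝ, (∀ k, 0 < lam k) → Tendsto lam atTop (𝓝 0) →
    ∀ (x : ℕ → H) (x₀ : H),
      (∀ k, p ≤ φl (lam k) (x k)) →
      (∀ k, ∀ y : H, p ≤ φl (lam k) y →
        eMoreauEnv ψ (lam k) (x k) ≤ eMoreauEnv ψ (lam k) y) →
      WeakSeqTendsto x x₀ →
      ((p ≤ φ x₀ ∧ ∀ y : H, p ≤ φ y → ψ x₀ ≤ ψ y) ∧
        Tendsto (fun k => eMoreauEnv ψ (lam k) (x k)) atTop (𝓝 (ψ x₀))) :=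
  stmt16_general P ξ hξ C hCne hCcpt Φ hΦ h hC1 hscal S hS φ hφ φl hφl hwk p ψ hψbot hψproper hψconv
    hψlsc
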